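/- Let x be an infinite word. Then x is rich if and only if every non-empty prefix of x has a unioccurrent palindromic suffix. -/

import Mathlib

/-- The finset of (distinct) palindromic factors of a finite word `w`,
including the empty word. -/
def palFactors {A : Type*} [DecidableEq A] (w : List A) : Finset (List A) :=
  ((w.inits.flatMap List.tails).filter (fun u => u.reverse = u)).toFinset

/-- A finite word `w` is rich if it has exactly `|w| + 1` distinct palindromic factors. -/
def Rich {A : Type*} [DecidableEq A] (w : List A) : Prop :=
  (palFactors w).card = w.length + 1

/-- A finite word `u` is a factor of the infinite word `x : ℕ → A` if it occurs
at some position `i` in `x`. -/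
def FactorOfInf {A : Type*} (u : List A) (x : ℕ → A) : Prop :=
  ∃ i : ℕ, u = (List.range u.length).map fun k => x (i + k)

/-- An infinite word is rich if all of its factors are rich. -/
def RichInf {A : Type*} [DecidableEq A] (x : ℕ → A) : Prop :=
  ∀ u : List A, FactorOfInf u x → Rich u

/-- A non-empty word `u` is unioccurrent in `v` if there is exactly one pair of
words `(s, t)` with `v = s ++ u ++ t`. -/
def Unioccurrent {A : Type*} (u v : List A) : Prop :=
  u ≠ [] ∧ ∃! st : List A × List A, v = st.1 ++ u ++ st.2

/-!
Appending a letter `a` to a word `w` creates at most one new palindromic factor: a new one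
must be a suffix of `w a`, and of two palindromic suffixes the shorter is also a prefix of the
longer, hence already occurs in `w` unless the two coincide. So a word of length `n` has at
most `n + 1` palindromic factors, and `w a` is rich iff `w` is rich and `w a` gains a new
palindrome, i.e. has a unioccurrent palindromic suffix. Richness passes to prefixes (by this
step) and to reversals, hence to all factors, so for an infinite word it suffices to check it
on prefixes.
-/

def HasUnioccurrentPalSuffix {α : Type*} (v : List α) : Prop :=
  ∃ s : List α, s <:+ v ∧ s.reverse = s ∧ Unioccurrent s v

open List

section Words

variable {α : Type*}

theorem infix_of_append_append_eq_concat {s u t w : List α} {a : α}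
    (h : s ++ u ++ t = w ++ [a]) (ht : t ≠ []) : u <:+: w := by
  obtain ⟨t', b, rfl⟩ := (eq_nil_or_concat t).resolve_left ht
  have h' : (s ++ u ++ t') ++ [b] = w ++ [a] := by simpa using h
  exact ⟨s, t', append_inj_left' h' rfl⟩

theorem unioccurrent_concat_iff {s w : List α} {a : α} (hs : s <:+ w ++ [a]) (hne : s ≠ []) :
    Unioccurrent s (w ++ [a]) ↔ ¬ s <:+: w := by
  obtain ⟨t, ht⟩ := hs
  constructor
  · rintro ⟨-, st, -, huniq⟩ ⟨p, q, rfl⟩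
    have h₁ := huniq (p, q ++ [a]) (by simp)
    have h₂ := huniq (t, []) (by simp [ht])
    simpa using congrArg Prod.snd (h₁.trans h₂.symm)
  · intro hnot
    refine ⟨hne, (t, []), by simp [ht], ?_⟩
    rintro ⟨p, q⟩ hpq
    rcases eq_or_ne q [] with rfl | hq
    · have : p = t := append_cancel_right (bs := s) (by simpa [← ht] using hpq.symm)
      simp [this]
    · exact absurd (infix_of_append_append_eq_concat hpq.symm hq) hnot

end Words

section PalFactors

variable {α : Type*} [DecidableEq α]

theorem mem_palFactors {u w : List α} : u ∈ palFactors w ↔ u <:+: w ∧ u.reverse = u := by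
  simp [palFactors, mem_inits, mem_tails, infix_iff_suffix_prefix, and_comm]

theorem palFactors_mono {v w : List α} (h : v <:+: w) : palFactors v ⊆ palFactors w := by
  intro u hu
  rw [mem_palFactors] at hu ⊢
  exact ⟨hu.1.trans h, hu.2⟩

theorem palFactors_reverse (w : List α) : palFactors w.reverse = palFactors w := by
  ext u
  simp only [mem_palFactors]
  constructor <;> rintro ⟨hinf, hpal⟩ <;> refine ⟨?_, hpal⟩
  · rwa [← reverse_infix, hpal]
  · rwa [← reverse_infix, hpal] at hinf

theorem isSuffix_of_mem_palFactors_concat_sdiff {u w : List α} {a : α}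
    (hu : u ∈ palFactors (w ++ [a]) \ palFactors w) : u <:+ w ++ [a] := by
  simp only [Finset.mem_sdiff, mem_palFactors, not_and] at hu
  exact (infix_concat_iff.1 hu.1.1).resolve_right fun h => hu.2 h hu.1.2

theorem card_palFactors_concat_sdiff_le_one (w : List α) (a : α) :
    (palFactors (w ++ [a]) \ palFactors w).card ≤ 1 := by
  refine Finset.card_le_one.2 fun u₁ h₁ u₂ h₂ => ?_
  wlog hle : u₁.length ≤ u₂.length generalizing u₁ u₂
  · exact (this u₂ h₂ u₁ h₁ (le_of_not_ge hle)).symm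
  have hpal₁ := (mem_palFactors.1 (Finset.mem_sdiff.1 h₁).1).2
  have hpal₂ := (mem_palFactors.1 (Finset.mem_sdiff.1 h₂).1).2
  have hsuf := suffix_of_suffix_length_le (isSuffix_of_mem_palFactors_concat_sdiff h₁)
    (isSuffix_of_mem_palFactors_concat_sdiff h₂) hle
  -- reversing the suffix relation between palindromes makes `u₁` a prefix of `u₂` as well
  obtain ⟨t, ht⟩ : u₁ <+: u₂ := by simpa [hpal₁, hpal₂] using reverse_prefix.2 hsuf
  rcases eq_or_ne t [] with rfl | hne
  · simpa using ht
  · obtain ⟨s, hs⟩ := isSuffix_of_mem_palFactors_concat_sdiff h₂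
    have hinf : u₁ <:+: w :=
      infix_of_append_append_eq_concat (s := s) (t := t) (by rw [← hs, ← ht, append_assoc]) hne
    exact absurd (mem_palFactors.2 ⟨hinf, hpal₁⟩) (Finset.mem_sdiff.1 h₁).2

theorem hasUnioccurrentPalSuffix_concat_iff {w : List α} {a : α} :
    HasUnioccurrentPalSuffix (w ++ [a]) ↔ (palFactors (w ++ [a]) \ palFactors w).Nonempty := by
  simp only [Finset.Nonempty, Finset.mem_sdiff, mem_palFactors, not_and]
  constructor
  · rintro ⟨s, hsuf, hpal, huni⟩
    have hnot := (unioccurrent_concat_iff hsuf huni.1).1 huni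
    exact ⟨s, ⟨hsuf.isInfix, hpal⟩, fun h _ => hnot h⟩
  · rintro ⟨s, ⟨hinf, hpal⟩, hnew⟩
    have hnot : ¬ s <:+: w := fun h => hnew h hpal
    have hsuf := (infix_concat_iff.1 hinf).resolve_right hnot
    have hne : s ≠ [] := by rintro rfl; exact hnot nil_infix
    exact ⟨s, hsuf, hpal, (unioccurrent_concat_iff hsuf hne).2 hnot⟩

theorem card_palFactors_concat (w : List α) (a : α) :
    (palFactors (w ++ [a])).card =
      (palFactors w).card + (palFactors (w ++ [a]) \ palFactors w).card := by
  rw [add_comm, Finset.card_sdiff_add_card_eq_card (palFactors_mono (prefix_append w [a]).isInfix)]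

theorem card_palFactors_le (w : List α) : (palFactors w).card ≤ w.length + 1 := by
  induction w using reverseRecOn with
  | nil => simp [palFactors]
  | append_singleton w a ih =>
    have := card_palFactors_concat_sdiff_le_one w a
    rw [card_palFactors_concat, length_append, length_singleton]
    omega

theorem rich_nil : Rich ([] : List α) := by
  simp [Rich, palFactors]

theorem rich_concat_iff {w : List α} {a : α} :
    Rich (w ++ [a]) ↔ Rich w ∧ HasUnioccurrentPalSuffix (w ++ [a]) := by
  have hle := card_palFactors_le w
  have hsdiff := card_palFactors_concat_sdiff_le_one w a
  rw [hasUnioccurrentPalSuffix_concat_iff, ← Finset.card_pos, Rich, Rich,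
    card_palFactors_concat, length_append, length_singleton]
  omega

theorem Rich.hasUnioccurrentPalSuffix {v : List α} (hv : Rich v) (hne : v ≠ []) :
    HasUnioccurrentPalSuffix v := by
  obtain ⟨w, a, rfl⟩ := (eq_nil_or_concat v).resolve_left hne
  rw [concat_eq_append] at hv ⊢
  exact (rich_concat_iff.1 hv).2

theorem Rich.of_isPrefix {p w : List α} (hw : Rich w) (hp : p <+: w) : Rich p := by
  obtain ⟨r, rfl⟩ := hp
  induction r using reverseRecOn with
  | nil => simpa using hw
  | append_singleton r a ih =>
    rw [← append_assoc] at hw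
    exact ih (rich_concat_iff.1 hw).1

theorem Rich.reverse {w : List α} (hw : Rich w) : Rich w.reverse := by
  rwa [Rich, palFactors_reverse, length_reverse]

theorem Rich.of_isSuffix {s w : List α} (hw : Rich w) (hs : s <:+ w) : Rich s := by
  simpa using (hw.reverse.of_isPrefix (reverse_prefix.2 hs)).reverse

end PalFactors

theorem rich_map_range_of_forall_hasUnioccurrentPalSuffix {α : Type*} [DecidableEq α]
    {x : ℕ → α} (hx : ∀ n, HasUnioccurrentPalSuffix ((range (n + 1)).map x)) (n : ℕ) :
    Rich ((range n).map x) := by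
  induction n with
  | zero => exact rich_nil
  | succ n ih =>
    have h := hx n
    rw [range_succ, map_append, map_singleton] at h ⊢
    exact rich_concat_iff.2 ⟨ih, h⟩

theorem isSuffix_map_range_of_factorOfInf {α : Type*} {u : List α} {x : ℕ → α}
    (hu : FactorOfInf u x) : ∃ n, u <:+ (range n).map x := by
  obtain ⟨i, hu⟩ := hu
  refine ⟨i + u.length, (range i).map x, ?_⟩
  rw [range_add, map_append, map_map]
  exact congrArg _ hu

/-- An infinite word `x` is rich if and only if every non-empty prefix of `x` has a
unioccurrent palindromic suffix.  (A prefix of `x` is a factor of `x` occurring at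
position `0`.) -/
theorem richInf_iff_prefixes_have_unioccurrent_pal_suffix {A : Type*} [DecidableEq A]
    (x : ℕ → A) :
    RichInf x ↔ ∀ p : List A, p = ((List.range p.length).map fun k => x k) → p ≠ [] →
      ∃ s : List A, s <:+ p ∧ s.reverse = s ∧ Unioccurrent s p := by
  constructor
  · intro hx p hp hne
    exact (hx p ⟨0, by simpa using hp⟩).hasUnioccurrentPalSuffix hne
  · intro hx u hu
    have hprefix : ∀ n, HasUnioccurrentPalSuffix ((range (n + 1)).map x) :=
      fun n => hx _ (by simp) (by simp)
    obtain ⟨n, hsuf⟩ := isSuffix_map_range_of_factorOfInf hu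
    exact (rich_map_range_of_forall_hasUnioccurrentPalSuffix hprefix n).of_isSuffix hsuf
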